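/- For n ≥ 2, the number of bicolored Motzkin paths of length n satisfying both restrictions — no umber horizontal step at height zero and no denim horizontal step before the first down step — equals the Catalan number C(n-1). -/

import Mathlib

inductive BStep : Type
  | U | D | Hu | Hd
deriving DecidableEq

def BStep.h : BStep → ℤ
  | .U => 1
  | .D => -1
  | .Hu => 0
  | .Hd => 0

/-- The height reached by a path (list of steps). -/
def hsum (p : List BStep) : ℤ := (p.map BStep.h).sum

/-- The path never goes below the x-axis. -/
def NonNegPath (p : List BStep) : Prop := ∀ k : ℕ, 0 ≤ hsum (p.take k)

/-- Restriction (1): no umber horizontal step occurs at height zero. -/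
def Res1 (p : List BStep) : Prop :=
  ∀ (i : ℕ) (hi : i < p.length), p.get ⟨i, hi⟩ = BStep.Hu → 0 < hsum (p.take i)

/-- Restriction (2): no denim horizontal step occurs before the first down step. -/
def Res2 (p : List BStep) : Prop :=
  ∀ (i : ℕ) (hi : i < p.length), p.get ⟨i, hi⟩ = BStep.Hd →
    ∃ (j : ℕ) (hj : j < p.length), j < i ∧ p.get ⟨j, hj⟩ = BStep.D

/-- A bicolored Motzkin path of length `n`: from (0,0) to (n,0), never below the x-axis. -/
def IsBMotzkin (n : ℕ) (p : List BStep) : Prop :=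
  p.length = n ∧ hsum p = 0 ∧ NonNegPath p

/-!
Every nonempty bicolored Motzkin path is `Hu q`, `Hd q` or `U a D b` with `a`, `b` bicolored
Motzkin paths, the `D` being the first return to the axis. Restriction (1) excludes a leading `Hu`
and, in `U a D b`, constrains only `b`; restriction (2) excludes a leading `Hd` and constrains only
`a`. The resulting convolution recurrences show that there are `C(n+1)` unrestricted paths of
length `n` and `C(n)` paths obeying either restriction alone, so the paths obeying both, which
must start with `U`, number `∑ C(i) C(n-2-i) = C(n-1)`.
-/

open Finset

instance : Fintype BStep :=
  ⟨{.U, .D, .Hu, .Hd}, fun s => by cases s <;> simp⟩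

@[simp] lemma hsum_nil : hsum [] = 0 := rfl

@[simp] lemma hsum_cons (s : BStep) (p : List BStep) : hsum (s :: p) = s.h + hsum p := by
  simp [hsum]

@[simp] lemma hsum_append (p q : List BStep) : hsum (p ++ q) = hsum p + hsum q := by
  simp [hsum]

section EachStep

variable {α : Type*}

def EachStep (P : List α → α → Prop) (p : List α) : Prop :=
  ∀ (i : ℕ) (hi : i < p.length), P (p.take i) p[i]

@[simp] lemma eachStep_nil (P : List α → α → Prop) : EachStep P [] :=
  fun _ hi => absurd hi (Nat.not_lt_zero _)

@[simp] lemma eachStep_true (p : List α) : EachStep (fun _ _ => True) p :=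
  fun _ _ => trivial

lemma eachStep_cons {P : List α → α → Prop} {s : α} {p : List α} :
    EachStep P (s :: p) ↔ P [] s ∧ EachStep (fun pre t => P (s :: pre) t) p := by
  refine ⟨fun h => ⟨h 0 (by simp), fun i hi => h (i + 1) (by simpa)⟩, ?_⟩
  rintro ⟨h0, h⟩ (_ | i) hi
  exacts [h0, h i (by simpa using hi)]

lemma eachStep_append {P : List α → α → Prop} {p q : List α} :
    EachStep P (p ++ q) ↔ EachStep P p ∧ EachStep (fun pre t => P (p ++ pre) t) q := by
  induction p generalizing P with
  | nil => simp
  | cons s p ih => simp [eachStep_cons, ih, and_assoc]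

end EachStep

lemma res1_iff_eachStep (p : List BStep) :
    Res1 p ↔ EachStep (fun pre s => s = .Hu → 0 < hsum pre) p := Iff.rfl

lemma res2_iff_eachStep (p : List BStep) :
    Res2 p ↔ EachStep (fun pre s => s = .Hd → .D ∈ pre) p := by
  simp only [Res2, EachStep, List.mem_take_iff_getElem, List.get_eq_getElem]
  refine forall₂_congr fun i hi => imp_congr_right fun _ => ⟨?_, ?_⟩
  · rintro ⟨j, hj, hji, hD⟩
    exact ⟨j, lt_min hji hj, hD⟩
  · rintro ⟨j, hj, hD⟩
    exact ⟨j, (lt_min_iff.mp hj).2, (lt_min_iff.mp hj).1, hD⟩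

def IsMotzkin (p : List BStep) : Prop := hsum p = 0 ∧ NonNegPath p

lemma nonNegPath_cons_iff {s : BStep} (hs : s.h = 0) {p : List BStep} :
    NonNegPath (s :: p) ↔ NonNegPath p := by
  refine ⟨fun h k => by simpa [hs] using h (k + 1), fun h k => ?_⟩
  cases k with
  | zero => simp
  | succ k => simpa [hs] using h k

lemma isMotzkin_cons_iff {s : BStep} (hs : s.h = 0) {p : List BStep} :
    IsMotzkin (s :: p) ↔ IsMotzkin p := by
  simp [IsMotzkin, nonNegPath_cons_iff hs, hs]

lemma not_isMotzkin_D_cons (p : List BStep) : ¬ IsMotzkin (.D :: p) := by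
  rintro ⟨-, h⟩
  simpa [BStep.h] using h 1

lemma isMotzkin_U_append_D {a b : List BStep} (ha : IsMotzkin a) (hb : IsMotzkin b) :
    IsMotzkin (.U :: a ++ .D :: b) := by
  refine ⟨by simp [BStep.h, ha.1, hb.1], ?_⟩
  rintro (_ | k)
  · simp
  · rw [List.cons_append, List.take_succ_cons, List.take_append, hsum_cons, hsum_append]
    obtain hk | ⟨m, hm⟩ : k - a.length = 0 ∨ ∃ m, k - a.length = m + 1 :=
      (k - a.length).eq_zero_or_eq_succ_pred.imp_right fun h => ⟨_, h⟩
    · rw [hk, List.take_zero, hsum_nil, BStep.h]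
      linarith [ha.2 k]
    · rw [hm, List.take_succ_cons, List.take_of_length_le (by omega)]
      simp only [hsum_cons, ha.1, BStep.h]
      linarith [hb.2 m]

lemma isMotzkin_of_isMotzkin_U_append_D {a b : List BStep} (ha : hsum a = 0)
    (h : IsMotzkin (.U :: a ++ .D :: b)) : IsMotzkin b := by
  refine ⟨by simpa [BStep.h, ha] using h.1, fun k => ?_⟩
  have := h.2 (a.length + (k + 1) + 1)
  rw [List.cons_append, List.take_succ_cons, List.take_length_add_append, List.take_succ_cons]
    at this
  simp only [hsum_cons, hsum_append, ha, BStep.h] at this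
  linarith

/-- Splitting at the first return to the axis. -/
lemma exists_append_D_of_isMotzkin_U_cons {q : List BStep} (h : IsMotzkin (.U :: q)) :
    ∃ a b, q = a ++ .D :: b ∧ IsMotzkin a := by
  have hex : ∃ j, hsum (q.take (j + 1)) < 0 := by
    refine ⟨q.length, ?_⟩
    have := h.1
    simp only [hsum_cons, BStep.h] at this
    rw [List.take_of_length_le (Nat.le_succ _)]
    linarith
  obtain ⟨j, hneg, hmin⟩ : ∃ j, hsum (q.take (j + 1)) < 0 ∧ ∀ k < j, 0 ≤ hsum (q.take (k + 1)) :=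
    ⟨Nat.find hex, Nat.find_spec hex, fun k hk => not_lt.mp (Nat.find_min hex hk)⟩
  have hpre (k : ℕ) (hk : k ≤ j) : 0 ≤ hsum (q.take k) := by
    rcases k with _ | k
    · simp
    · exact hmin k hk
  have hj : j < q.length := by
    by_contra! hj
    have h1 := hpre j le_rfl
    rw [List.take_of_length_le hj] at h1
    rw [List.take_of_length_le (by omega)] at hneg
    omega
  have hstep : hsum (q.take (j + 1)) = hsum (q.take j) + q[j].h := by
    rw [List.take_add_one, List.getElem?_eq_getElem hj, Option.toList_some, hsum_append,
      hsum_cons, hsum_nil, add_zero]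
  have hj0 := hpre j le_rfl
  have hD : q[j] = .D := by
    cases hc : q[j] <;> rw [hc] at hstep <;> simp only [BStep.h] at hstep <;> first | rfl | omega
  refine ⟨q.take j, q.drop (j + 1), ?_, ?_, fun k => ?_⟩
  · rw [← hD, ← List.drop_eq_getElem_cons hj, List.take_append_drop]
  · rw [hD] at hstep
    simp only [BStep.h] at hstep
    omega
  · rw [List.take_take]
    exact hpre _ (min_le_right _ _)

lemma length_le_of_append_D_eq {a b a' b' : List BStep} (h : a ++ .D :: b = a' ++ .D :: b')
    (ha : NonNegPath a) (ha' : hsum a' = 0) : a.length ≤ a'.length := by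
  by_contra! hlt
  have hpre := ha (a'.length + 1)
  have hret : (a ++ .D :: b).take (a'.length + 1) = a' ++ [.D] := by
    rw [h, List.take_length_add_append]
    rfl
  rw [List.take_append_of_le_length hlt] at hret
  rw [hret, hsum_append, ha'] at hpre
  simp [BStep.h] at hpre

lemma append_D_inj {a b a' b' : List BStep} (h : a ++ .D :: b = a' ++ .D :: b')
    (ha : IsMotzkin a) (ha' : IsMotzkin a') : a = a' ∧ b = b' := by
  have hlen := le_antisymm (length_le_of_append_D_eq h ha.2 ha'.1)
    (length_le_of_append_D_eq h.symm ha'.2 ha.1)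
  obtain ⟨rfl, hb⟩ := List.append_inj h hlen
  exact ⟨rfl, (List.cons.inj hb).2⟩

lemma not_res1_Hu_cons (p : List BStep) : ¬ Res1 (.Hu :: p) := by
  simp [res1_iff_eachStep, eachStep_cons]

lemma res1_Hd_cons (p : List BStep) : Res1 (.Hd :: p) ↔ Res1 p := by
  simp [res1_iff_eachStep, eachStep_cons, BStep.h]

lemma res1_U_append_D {a b : List BStep} (ha : IsMotzkin a) :
    Res1 (.U :: a ++ .D :: b) ↔ Res1 b := by
  have ha' : EachStep (fun pre s => s = .Hu → 0 < 1 + hsum pre) a := fun i _ _ => by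
    linarith [ha.2 i]
  simp [res1_iff_eachStep, eachStep_cons, eachStep_append, BStep.h, ha.1, ha']

lemma res2_Hu_cons (p : List BStep) : Res2 (.Hu :: p) ↔ Res2 p := by
  simp [res2_iff_eachStep, eachStep_cons]

lemma not_res2_Hd_cons (p : List BStep) : ¬ Res2 (.Hd :: p) := by
  simp [res2_iff_eachStep, eachStep_cons]

lemma res2_U_append_D (a b : List BStep) : Res2 (.U :: a ++ .D :: b) ↔ Res2 a := by
  simp [res2_iff_eachStep, eachStep_cons, eachStep_append]

instance {α : Type*} [Finite α] (n : ℕ) (P : List α → Prop) :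
    Finite {p : List α // p.length = n ∧ P p} :=
  Finite.of_injective (β := List.Vector α n) (fun p => ⟨p.1, p.2.1⟩)
    fun _ _ h => Subtype.ext (Subtype.mk.inj h)

noncomputable def motzkinCount (P : List BStep → Prop) (n : ℕ) : ℕ :=
  Nat.card {p : List BStep // p.length = n ∧ IsMotzkin p ∧ P p}

theorem motzkinCount_succ {P Phu Phd A B : List BStep → Prop}
    (hHu : ∀ q, P (.Hu :: q) ↔ Phu q) (hHd : ∀ q, P (.Hd :: q) ↔ Phd q)
    (hUD : ∀ a b, IsMotzkin a → IsMotzkin b → (P (.U :: a ++ .D :: b) ↔ A a ∧ B b)) (n : ℕ) :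
    motzkinCount P (n + 1) = motzkinCount Phu n + motzkinCount Phd n +
      ∑ i ∈ range n, motzkinCount A i * motzkinCount B (n - 1 - i) := by
  let f : {q : List BStep // q.length = n ∧ IsMotzkin q ∧ Phu q} ⊕
      {q : List BStep // q.length = n ∧ IsMotzkin q ∧ Phd q} ⊕
      (Σ i : Fin n, {a : List BStep // a.length = i ∧ IsMotzkin a ∧ A a} ×
        {b : List BStep // b.length = n - 1 - i ∧ IsMotzkin b ∧ B b}) →
      {p : List BStep // p.length = n + 1 ∧ IsMotzkin p ∧ P p}
    | .inl q => ⟨.Hu :: q, by simp [q.2.1], (isMotzkin_cons_iff rfl).2 q.2.2.1, (hHu _).2 q.2.2.2⟩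
    | .inr (.inl q) =>
      ⟨.Hd :: q, by simp [q.2.1], (isMotzkin_cons_iff rfl).2 q.2.2.1, (hHd _).2 q.2.2.2⟩
    | .inr (.inr ⟨i, a, b⟩) =>
      ⟨.U :: a ++ .D :: b,
        by simp only [List.length_append, List.length_cons, a.2.1, b.2.1]; omega,
        isMotzkin_U_append_D a.2.2.1 b.2.2.1, (hUD _ _ a.2.2.1 b.2.2.1).2 ⟨a.2.2.2, b.2.2.2⟩⟩
  have hf : f.Bijective := by
    constructor
    · rintro (q | q | ⟨i, a, b⟩) (q' | q' | ⟨i', a', b'⟩) h <;>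
        simp only [f, Subtype.mk.injEq, List.cons_append, List.cons.injEq, reduceCtorEq, true_and,
          false_and] at h
      · rw [Subtype.ext h]
      · rw [Subtype.ext h]
      · obtain ⟨ha, hb⟩ := append_D_inj h a.2.2.1 a'.2.2.1
        obtain rfl : i = i' := Fin.ext (a.2.1.symm.trans (ha ▸ a'.2.1))
        rw [Subtype.ext ha, Subtype.ext hb]
    · rintro ⟨_ | ⟨s, q⟩, hlen, hM, hP⟩
      · simp at hlen
      have hq : q.length = n := by simpa using hlen
      cases s with
      | U =>
        obtain ⟨a, b, rfl, ha⟩ := exists_append_D_of_isMotzkin_U_cons hM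
        have hb := isMotzkin_of_isMotzkin_U_append_D ha.1 hM
        obtain ⟨hA, hB⟩ := (hUD a b ha hb).1 hP
        simp only [List.length_append, List.length_cons] at hq
        exact ⟨.inr (.inr ⟨⟨a.length, by omega⟩, ⟨a, rfl, ha, hA⟩,
          ⟨b, by dsimp only; omega, hb, hB⟩⟩), rfl⟩
      | D => exact absurd hM (not_isMotzkin_D_cons q)
      | Hu => exact ⟨.inl ⟨q, hq, (isMotzkin_cons_iff rfl).1 hM, (hHu q).1 hP⟩, rfl⟩
      | Hd => exact ⟨.inr (.inl ⟨q, hq, (isMotzkin_cons_iff rfl).1 hM, (hHd q).1 hP⟩), rfl⟩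
  rw [motzkinCount, ← Nat.card_eq_of_bijective f hf, Nat.card_sum, Nat.card_sum, Nat.card_sigma,
    ← Fin.sum_univ_eq_sum_range]
  simp only [Nat.card_prod, motzkinCount, add_assoc]

lemma motzkinCount_zero {P : List BStep → Prop} (h : P []) : motzkinCount P 0 = 1 := by
  have hnil : IsMotzkin [] := ⟨rfl, fun k => by simp⟩
  rw [motzkinCount, Nat.card_eq_one_iff_unique]
  refine ⟨⟨fun p q => Subtype.ext ?_⟩, ⟨⟨[], rfl, hnil, h⟩⟩⟩
  rw [List.eq_nil_of_length_eq_zero p.2.1, List.eq_nil_of_length_eq_zero q.2.1]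

lemma motzkinCount_false (n : ℕ) : motzkinCount (fun _ => False) n = 0 := by
  simp [motzkinCount]

lemma catalan_succ_eq_sum_range (n : ℕ) :
    catalan (n + 1) = ∑ i ∈ range (n + 1), catalan i * catalan (n - i) := by
  rw [catalan_succ, Fin.sum_univ_eq_sum_range (fun i => catalan i * catalan (n - i))]

theorem motzkinCount_true (n : ℕ) : motzkinCount (fun _ => True) n = catalan (n + 1) := by
  induction n using Nat.strong_induction_on with
  | _ n ih =>
  rcases n with _ | n
  · exact (motzkinCount_zero (P := fun _ => True) trivial).trans catalan_one.symm
  rw [motzkinCount_succ (A := fun _ => True) (B := fun _ => True) (fun _ => Iff.rfl)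
      (fun _ => Iff.rfl) (fun _ _ _ _ => (and_self_iff).symm),
    ih n (by omega), catalan_succ_eq_sum_range (n + 1), sum_range_succ', sum_range_succ]
  have hconv : ∑ i ∈ range n, motzkinCount (fun _ => True) i *
      motzkinCount (fun _ => True) (n - 1 - i) =
      ∑ i ∈ range n, catalan (i + 1) * catalan (n + 1 - (i + 1)) := by
    refine sum_congr rfl fun i hi => ?_
    rw [mem_range] at hi
    rw [ih i (by omega), ih (n - 1 - i) (by omega), show n - 1 - i + 1 = n + 1 - (i + 1) by omega]
  rw [hconv, Nat.sub_self, Nat.sub_zero, catalan_zero]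
  ring

theorem motzkinCount_res2 (n : ℕ) : motzkinCount Res2 n = catalan n := by
  induction n using Nat.strong_induction_on with
  | _ n ih =>
  rcases n with _ | n
  · exact (motzkinCount_zero ((res2_iff_eachStep []).2 (eachStep_nil _))).trans catalan_zero.symm
  rw [motzkinCount_succ (A := Res2) (B := fun _ => True) res2_Hu_cons
      (fun q => iff_false_intro (not_res2_Hd_cons q))
      (fun a b _ _ => by rw [res2_U_append_D, and_true]),
    ih n (by omega), motzkinCount_false, catalan_succ_eq_sum_range, sum_range_succ]
  have hconv : ∑ i ∈ range n, motzkinCount Res2 i * motzkinCount (fun _ => True) (n - 1 - i) =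
      ∑ i ∈ range n, catalan i * catalan (n - i) := by
    refine sum_congr rfl fun i hi => ?_
    rw [mem_range] at hi
    rw [ih i (by omega), motzkinCount_true, show n - 1 - i + 1 = n - i by omega]
  rw [hconv, Nat.sub_self, catalan_zero, mul_one, add_zero, add_comm]

theorem motzkinCount_res1 (n : ℕ) : motzkinCount Res1 n = catalan n := by
  induction n using Nat.strong_induction_on with
  | _ n ih =>
  rcases n with _ | n
  · exact (motzkinCount_zero ((res1_iff_eachStep []).2 (eachStep_nil _))).trans catalan_zero.symm
  rw [motzkinCount_succ (A := fun _ => True) (B := Res1)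
      (fun q => iff_false_intro (not_res1_Hu_cons q)) res1_Hd_cons
      (fun a b ha _ => by rw [res1_U_append_D ha, true_and]),
    ih n (by omega), motzkinCount_false, catalan_succ_eq_sum_range, sum_range_succ']
  have hconv : ∑ i ∈ range n, motzkinCount (fun _ => True) i * motzkinCount Res1 (n - 1 - i) =
      ∑ i ∈ range n, catalan (i + 1) * catalan (n - (i + 1)) := by
    refine sum_congr rfl fun i hi => ?_
    rw [mem_range] at hi
    rw [motzkinCount_true, ih (n - 1 - i) (by omega), Nat.sub_sub, add_comm 1 i]
  rw [hconv, Nat.sub_zero, catalan_zero, one_mul, zero_add, add_comm]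

theorem motzkinCount_res1_res2 (n : ℕ) :
    motzkinCount (fun p => Res1 p ∧ Res2 p) (n + 2) = catalan (n + 1) := by
  rw [motzkinCount_succ (A := Res2) (B := Res1)
      (fun q => iff_false_intro fun h => not_res1_Hu_cons q h.1)
      (fun q => iff_false_intro fun h => not_res2_Hd_cons q h.2)
      (fun a b ha _ => by rw [res1_U_append_D ha, res2_U_append_D, and_comm]),
    motzkinCount_false, catalan_succ_eq_sum_range]
  rw [Nat.add_zero, Nat.zero_add]
  refine sum_congr rfl fun i _ => ?_
  rw [motzkinCount_res2, motzkinCount_res1, Nat.add_sub_cancel]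

theorem bicolored_motzkin_res12_count (n : ℕ) (hn : 2 ≤ n) :
    Nat.card {p : List BStep // IsBMotzkin n p ∧ Res1 p ∧ Res2 p} = catalan (n - 1) := by
  obtain ⟨m, rfl⟩ := Nat.exists_eq_add_of_le' hn
  refine (Nat.card_congr (Equiv.subtypeEquivRight fun p => ?_)).trans (motzkinCount_res1_res2 m)
  rw [IsBMotzkin, IsMotzkin, and_assoc]
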